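/- arXiv:2602.01488 — 2 statements merged into one kernel-verified Lean document; each statement's English description precedes it below -/
import Mathlib

section
/- Let ℓ ≥ 2 and let x < y < z be consecutive elements of V̄_ℓ not all contained in V̄_{ℓ+1}. Then exactly one of the following holds: (i) ᾱ(x) ≥ F_{ℓ+1}, ᾱ(y) = F_ℓ, ᾱ(z) ≥ F_{ℓ+1}, and z − x = F_ℓ; (ii) ᾱ(x) = F_ℓ, ᾱ(y) ≥ F_{ℓ+1}, ᾱ(z) = F_ℓ, and y − x = z − y; (iii) ᾱ(x) = F_ℓ, ᾱ(y) = F_{ℓ+1}, ᾱ(z) ≥ F_{ℓ+2}, and y − x = z − y = F_{ℓ−1}; (iv) ᾱ(x) ≥ F_{ℓ+2}, ᾱ(y) = F_{ℓ+1}, ᾱ(z) = F_ℓ, and y − x = z − y = F_{ℓ−1}. -/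
noncomputable section

/-- `F i` is the Fibonacci number `F_i` of the paper (`F_0 = 1`, `F_1 = 1`, `F_2 = 2`, ...). -/
def F (i : ℕ) : ℕ := Nat.fib (i + 1)

/-- `x` belongs to the set `F̄ = {0,1,2,3,5,8,...}` of all Fibonacci numbers (including `0`). -/
def IsFib (x : ℕ) : Prop := ∃ i : ℕ, Nat.fib i = x

open scoped Classical in
/-- The map `ῑ : ℕ → ℕ`: `ῑ(x) = x` if `x ∈ F̄`, and `ῑ(x) = x - 2 F_{i-2}`
if `F_i < x < F_{i+1}` for the (unique) integer `i ≥ 3`. -/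
noncomputable def iotaBar (x : ℕ) : ℕ :=
  if IsFib x then x
  else x - 2 * F (sInf {i : ℕ | x < F (i + 1)} - 2)

/-- `ᾱ(x)` is the eventual constant value of the iterates of `ῑ` at `x`
(the iterates stabilize after at most `x` steps). -/
noncomputable def alphaBar (x : ℕ) : ℕ := iotaBar^[x] x

/-- `V̄_ℓ = {x ∈ ℕ : ᾱ(x) ≥ F_ℓ}`. -/
def VBar (ℓ : ℕ) : Set ℕ := {x : ℕ | F ℓ ≤ alphaBar x}

/-- `x < y` are consecutive elements of `S`. -/
def ConsecIn (S : Set ℕ) (x y : ℕ) : Prop :=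
  x ∈ S ∧ y ∈ S ∧ x < y ∧ ∀ z ∈ S, ¬(x < z ∧ z < y)

-- ## F basics
lemma F_add_two (n : ℕ) : F (n+2) = F (n+1) + F n := by
  simp [F, Nat.fib_add_two]; omega

lemma F_pos (n : ℕ) : 0 < F n := by
  have : 0 < n + 1 := Nat.succ_pos n
  exact Nat.fib_pos.2 this

lemma F_le_F {a b : ℕ} (h : a ≤ b) : F a ≤ F b :=
  Nat.fib_mono (by omega)

lemma F_lt_F {a b : ℕ} (ha : 1 ≤ a) (h : a < b) : F a < F b := by
  have h1 : Nat.fib (a+1) < Nat.fib (a+2) := Nat.fib_lt_fib_succ (by omega)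
  have h2 : Nat.fib (a+2) ≤ Nat.fib (b+1) := Nat.fib_mono (by omega)
  exact lt_of_lt_of_le h1 h2

lemma isFib_F (n : ℕ) : IsFib (F n) := ⟨n+1, rfl⟩

lemma self_le_F (n : ℕ) : n ≤ F n := by
  induction n using Nat.strong_induction_on with
  | _ n ih =>
    match n with
    | 0 => simp [F]
    | 1 => simp [F]
    | (n+2) =>
      have h1 := ih (n+1) (by omega)
      have h2 := F_pos n
      rw [F_add_two]; omega

lemma not_isFib_between {i x : ℕ} (h1 : F i < x) (h2 : x < F (i+1)) : ¬ IsFib x := by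
  rintro ⟨j, rfl⟩
  have hx2 : 2 ≤ Nat.fib j := by
    have := F_pos i; omega
  have hj : 3 ≤ j := by
    by_contra h
    interval_cases j <;> simp_all
  have hij : i + 1 < j := by
    by_contra h
    have : Nat.fib j ≤ Nat.fib (i+1) := Nat.fib_mono (by omega)
    exact absurd h1 (by unfold F at *; omega)
  have : Nat.fib (i+1+1) ≤ Nat.fib j := Nat.fib_mono (by omega)
  unfold F at h2; omega

lemma fib_index {z : ℕ} (h : IsFib z) (h2 : 2 ≤ z) : ∃ i, 2 ≤ i ∧ F i = z := by
  obtain ⟨j, rfl⟩ := h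
  have hj : 3 ≤ j := by
    by_contra h
    interval_cases j <;> simp_all
  obtain ⟨j', rfl⟩ : ∃ j', j = j' + 3 := ⟨j - 3, by omega⟩
  exact ⟨j' + 2, by omega, rfl⟩

-- ## iota basics
lemma iota_fib {x : ℕ} (h : IsFib x) : iotaBar x = x := by
  unfold iotaBar; rw [if_pos h]

lemma iota_le (x : ℕ) : iotaBar x ≤ x := by
  unfold iotaBar; split
  · exact le_rfl
  · exact Nat.sub_le _ _

lemma iota_lt {x : ℕ} (h : ¬ IsFib x) (hx : 0 < x) : iotaBar x < x := by
  unfold iotaBar; rw [if_neg h]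
  exact Nat.sub_lt hx (by have := F_pos (sInf {i : ℕ | x < F (i + 1)} - 2); omega)

lemma iota_win (j x : ℕ) (h1 : F (j+3) < x) (h2 : x < F (j+4)) :
    iotaBar x = x - 2 * F (j+1) := by
  have hnf := not_isFib_between h1 h2
  unfold iotaBar; rw [if_neg hnf]
  have hmem : (j+3) ∈ {i : ℕ | x < F (i + 1)} := by
    simp only [Set.mem_setOf_eq]; exact h2
  have hs : sInf {i : ℕ | x < F (i + 1)} = j + 3 := by
    apply le_antisymm
    · exact Nat.sInf_le hmem
    · apply le_csInf ⟨j+3, hmem⟩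
      intro b hb
      by_contra hlt
      have : F (b+1) ≤ F (j+3) := F_le_F (by omega)
      simp only [Set.mem_setOf_eq] at hb
      omega
  rw [hs, show j + 3 - 2 = j + 1 from by omega]

lemma iter_fix {x : ℕ} (h : IsFib x) (k : ℕ) : iotaBar^[k] x = x := by
  induction k with
  | zero => rfl
  | succ k ih => rw [Function.iterate_succ_apply, iota_fib h, ih]

lemma stab (x : ℕ) : ∀ m, x ≤ m → iotaBar^[m] x = iotaBar^[x] x := by
  induction x using Nat.strong_induction_on with
  | _ x ih =>
    intro m hm
    by_cases hf : IsFib x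
    · rw [iter_fix hf, iter_fix hf]
    · have hx : 0 < x := by
        rcases Nat.eq_zero_or_pos x with h | h
        · exact absurd ⟨0, by simp [h]⟩ hf
        · exact h
      have hlt := iota_lt hf hx
      obtain ⟨m', rfl⟩ : ∃ m', m = m' + 1 := ⟨m - 1, by omega⟩
      obtain ⟨x', rfl⟩ : ∃ x', x = x' + 1 := ⟨x - 1, by omega⟩
      rw [Function.iterate_succ_apply, Function.iterate_succ_apply]
      rw [ih (iotaBar (x'+1)) hlt m' (by omega), ih (iotaBar (x'+1)) hlt x' (by omega)]

lemma alpha_iota (x : ℕ) : alphaBar (iotaBar x) = alphaBar x := by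
  by_cases hf : IsFib x
  · rw [iota_fib hf]
  · have hx : 0 < x := by
      rcases Nat.eq_zero_or_pos x with h | h
      · exact absurd ⟨0, by simp [h]⟩ hf
      · exact h
    have hlt := iota_lt hf hx
    unfold alphaBar
    rw [← stab (iotaBar x) x (by omega), ← Function.iterate_succ_apply,
      stab x (x+1) (by omega)]

lemma alpha_fib {x : ℕ} (h : IsFib x) : alphaBar x = x := iter_fix h x

lemma alpha_le (x : ℕ) : alphaBar x ≤ x := by
  suffices h : ∀ k y, iotaBar^[k] y ≤ y from h x x
  intro k
  induction k with
  | zero => exact fun y => le_rfl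
  | succ k ih =>
    intro y
    rw [Function.iterate_succ_apply']
    exact le_trans (iota_le _) (ih y)

lemma alpha_win (j x : ℕ) (h1 : F (j+3) < x) (h2 : x < F (j+4)) :
    alphaBar (x - 2 * F (j+1)) = alphaBar x := by
  rw [← iota_win j x h1 h2]; exact alpha_iota x

lemma alpha_up (j t : ℕ) (h0 : 0 < t) (ht : t < F (j+2)) :
    alphaBar (F (j+3) + t) = alphaBar (F j + t) := by
  have e3 : F (j+3) = F (j+2) + F (j+1) := F_add_two (j+1)
  have e2 : F (j+2) = F (j+1) + F j := F_add_two j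
  have h1 : F (j+3) < F (j+3) + t := by omega
  have h2 : F (j+3) + t < F (j+4) := by
    have e4 : F (j+4) = F (j+3) + F (j+2) := F_add_two (j+2)
    omega
  have := alpha_win j (F (j+3) + t) h1 h2
  have e : F (j+3) + t - 2 * F (j+1) = F j + t := by omega
  rw [e] at this
  exact this.symm

-- ## small values
lemma F0 : F 0 = 1 := rfl
lemma F1 : F 1 = 1 := rfl
lemma F2 : F 2 = 2 := rfl
lemma F3 : F 3 = 3 := rfl
lemma F4 : F 4 = 5 := rfl
lemma F5 : F 5 = 8 := rfl
lemma F6 : F 6 = 13 := rfl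

lemma alpha_eval_step (j x v : ℕ) (h1 : F (j+3) < x) (h2 : x < F (j+4))
    (he : x - 2*F (j+1) = v) : alphaBar x = alphaBar v := by
  rw [← he]; exact (alpha_win j x h1 h2).symm

lemma alpha_two : alphaBar 2 = 2 := alpha_fib ⟨3, rfl⟩
lemma alpha_three : alphaBar 3 = 3 := alpha_fib ⟨4, rfl⟩
lemma alpha_four : alphaBar 4 = 2 := by
  rw [alpha_eval_step 0 4 2 (by rw [F3]; norm_num) (by rw [F4]; norm_num) (by rw [F1])]
  exact alpha_two
lemma alpha_six : alphaBar 6 = 2 := by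
  rw [alpha_eval_step 1 6 2 (by rw [F4]; norm_num) (by rw [F5]; norm_num) (by rw [F2])]
  exact alpha_two
lemma alpha_seven : alphaBar 7 = 3 := by
  rw [alpha_eval_step 1 7 3 (by rw [F4]; norm_num) (by rw [F5]; norm_num) (by rw [F2])]
  exact alpha_three
lemma alpha_twelve : alphaBar 12 = 2 := by
  rw [alpha_eval_step 2 12 6 (by rw [F5]; norm_num) (by rw [F6]; norm_num) (by rw [F3])]
  exact alpha_six

-- ## mirror lemma
lemma alpha_mirror : ∀ k s : ℕ, 0 < s → s < F (k+2) →
    alphaBar (F (k+3) - s) = alphaBar (F (k+3) + s) := by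
  intro k
  induction k using Nat.strong_induction_on with
  | _ k ih =>
  intro s h0 h1
  match k with
  | 0 =>
    rw [F2] at h1
    have hs : s = 1 := by omega
    subst hs
    rw [F3]
    show alphaBar 2 = alphaBar 4
    rw [alpha_two, alpha_four]
  | 1 =>
    rw [F3] at h1
    rw [F4]
    interval_cases s
    · show alphaBar 4 = alphaBar 6
      rw [alpha_four, alpha_six]
    · show alphaBar 3 = alphaBar 7
      rw [alpha_three, alpha_seven]
  | (K+2) =>
    show alphaBar (F (K+5) - s) = alphaBar (F (K+5) + s)
    have h1' : s < F (K+4) := h1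
    have e0 : F (K+2) = F (K+1) + F K := F_add_two K
    have e1 : F (K+3) = F (K+2) + F (K+1) := F_add_two (K+1)
    have e2 : F (K+4) = F (K+3) + F (K+2) := F_add_two (K+2)
    have e3 : F (K+5) = F (K+4) + F (K+3) := F_add_two (K+3)
    have hR : alphaBar (F (K+5) + s) = alphaBar (F (K+2) + s) := alpha_up (K+2) s h0 h1
    rcases lt_trichotomy s (F (K+3)) with hlt | heq | hgt
    · -- s < F (K+3)
      have hL : alphaBar (F (K+5) - s) = alphaBar (F (K+3) + F (K+1) - s) :=
        alpha_eval_step (K+1) _ _ (show F (K+4) < F (K+5) - s by omega)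
          (show F (K+5) - s < F (K+5) by omega)
          (show F (K+5) - s - 2*F (K+2) = F (K+3) + F (K+1) - s by omega)
      rw [hL, hR]
      rcases lt_trichotomy s (F (K+1)) with h2 | h2 | h2
      · have hmir := ih K (by omega) (F (K+1) - s) (by omega) (by omega)
        rw [show F (K+3) + F (K+1) - s = F (K+3) + (F (K+1) - s) from by omega,
            show F (K+2) + s = F (K+3) - (F (K+1) - s) from by omega]
        exact hmir.symm
      · rw [show F (K+3) + F (K+1) - s = F (K+2) + s from by omega]
      · have hmir := ih K (by omega) (s - F (K+1)) (by omega) (by omega)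
        rw [show F (K+3) + F (K+1) - s = F (K+3) - (s - F (K+1)) from by omega,
            show F (K+2) + s = F (K+3) + (s - F (K+1)) from by omega]
        exact hmir
    · -- s = F (K+3)
      rw [hR, show F (K+5) - s = F (K+4) from by omega,
          show F (K+2) + s = F (K+4) from by omega]
    · -- F (K+3) < s
      rcases Nat.eq_zero_or_pos K with hK0 | hKpos
      · subst hK0
        have hgt' : F 3 < s := hgt
        rw [F3] at hgt'
        have h4 : s < F 4 := h1'
        rw [F4] at h4
        have hs : s = 4 := by omega
        subst hs
        show alphaBar (F 5 - 4) = alphaBar (F 5 + 4)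
        rw [F5]
        norm_num
        rw [alpha_four, alpha_twelve]
      · obtain ⟨K', hK'⟩ : ∃ K', K = K' + 1 := ⟨K - 1, by omega⟩
        have m1 : F (K-1+3) = F (K+2) := by subst hK'; rfl
        have m2 : F (K-1+2) = F (K+1) := by subst hK'; rfl
        have e4 : F (K+1) = F K + F (K-1) := by subst hK'; exact F_add_two K'
        have hL : alphaBar (F (K+5) - s) = alphaBar (F (K+4) + F K - s) :=
          alpha_eval_step K _ _ (show F (K+3) < F (K+5) - s by omega)
            (show F (K+5) - s < F (K+4) by omega)
            (show F (K+5) - s - 2*F (K+1) = F (K+4) + F K - s by omega)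
        have hR2 : alphaBar (F (K+2) + s) = alphaBar (s - F (K+2)) :=
          alpha_eval_step (K+1) _ _ (show F (K+4) < F (K+2) + s by omega)
            (show F (K+2) + s < F (K+5) by omega)
            (show F (K+2) + s - 2*F (K+2) = s - F (K+2) by omega)
        rw [hL, hR, hR2]
        rcases lt_trichotomy s (2 * F (K+2)) with h2 | h2 | h2
        · have hmir := ih (K-1) (by omega) (2 * F (K+2) - s) (by omega) (by omega)
          rw [show F (K+4) + F K - s = F (K-1+3) + (2 * F (K+2) - s) from by omega,
              show s - F (K+2) = F (K-1+3) - (2 * F (K+2) - s) from by omega]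
          exact hmir.symm
        · rw [show F (K+4) + F K - s = s - F (K+2) from by omega]
        · have hmir := ih (K-1) (by omega) (s - 2 * F (K+2)) (by omega) (by omega)
          rw [show F (K+4) + F K - s = F (K-1+3) - (s - 2 * F (K+2)) from by omega,
              show s - F (K+2) = F (K-1+3) + (s - 2 * F (K+2)) from by omega]
          exact hmir

-- ## Above-structure
def AP (ℓ i a₁ v₁ a₂ v₂ : ℕ) : Prop :=
  alphaBar (F i + a₁) = v₁ ∧ alphaBar (F i + a₂) = v₂ ∧
  ∀ t, 0 < t → t < a₂ → t ≠ a₁ → alphaBar (F i + t) < F ℓ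

lemma AP_step {ℓ i a₁ v₁ a₂ v₂ : ℕ} (h : AP ℓ i a₁ v₁ a₂ v₂)
    (h1 : 0 < a₁) (h12 : a₁ < a₂) (ha : a₂ < F (i+2)) : AP ℓ (i+3) a₁ v₁ a₂ v₂ := by
  obtain ⟨hA, hB, hG⟩ := h
  refine ⟨?_, ?_, ?_⟩
  · rw [alpha_up i a₁ h1 (by omega)]; exact hA
  · rw [alpha_up i a₂ (by omega) ha]; exact hB
  · intro t ht0 ht2 htn
    rw [alpha_up i t ht0 (by omega)]
    exact hG t ht0 ht2 htn

lemma above0_base (m : ℕ) : AP (m+2) (m+2) (F (m+1)) (F (m+3)) (2*F (m+1)) (F (m+2)) := by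
  have e1 : F (m+2) = F (m+1) + F m := F_add_two m
  have e2 : F (m+3) = F (m+2) + F (m+1) := F_add_two (m+1)
  have hp0 := F_pos m
  have hp1 := F_pos (m+1)
  refine ⟨?_, ?_, ?_⟩
  · rw [show F (m+2) + F (m+1) = F (m+3) from by omega]
    exact alpha_fib (isFib_F (m+3))
  · rw [show F (m+2) + 2*F (m+1) = F (m+3) + F (m+1) from by omega]
    rw [alpha_up m (F (m+1)) hp1 (by omega)]
    rw [show F m + F (m+1) = F (m+2) from by omega]
    exact alpha_fib (isFib_F (m+2))
  · intro t ht0 ht2 htn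
    rcases lt_trichotomy t (F (m+1)) with h | h | h
    · match m with
      | 0 =>
        have n0 : F 0 = 1 := rfl
        have n1 : F (0+1) = 1 := rfl
        have n2 : F (0+2) = 2 := rfl
        have n3 : F (0+3) = 3 := rfl
        have n4 : F (0+4) = 5 := rfl
        omega
      | (M+1) =>
        have r1 : F (M+1+1) = F (M+2) := rfl
        have r2 : F (M+1+2) = F (M+3) := rfl
        have r3 : F (M+1+3) = F (M+4) := rfl
        have r4 : F (M+1+4) = F (M+5) := rfl
        have f1 : F (M+2) = F (M+1) + F M := F_add_two M
        have f2 : F (M+3) = F (M+2) + F (M+1) := F_add_two (M+1)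
        have f3 : F (M+4) = F (M+3) + F (M+2) := F_add_two (M+2)
        have f5 : F (M+5) = F (M+4) + F (M+3) := F_add_two (M+3)
        have f4 := F_pos M
        have f6 : F M ≤ F (M+1) := F_le_F (by omega)
        show alphaBar (F (M+3) + t) < F (M+3)
        rw [alpha_up M t ht0 (by omega)]
        have hle := alpha_le (F M + t)
        omega
    · exact absurd h htn
    · rw [show F (m+2) + t = F (m+3) + (t - F (m+1)) from by omega]
      rw [alpha_up m (t - F (m+1)) (by omega) (by omega)]
      have hle := alpha_le (F m + (t - F (m+1)))
      omega

lemma above1_base (m : ℕ) : AP (m+2) (m+3) (F (m+1)) (F (m+2)) (F (m+2)) (F (m+4)) := by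
  have e1 : F (m+2) = F (m+1) + F m := F_add_two m
  have e2 : F (m+3) = F (m+2) + F (m+1) := F_add_two (m+1)
  have e3 : F (m+4) = F (m+3) + F (m+2) := F_add_two (m+2)
  have hp0 := F_pos m
  have hp1 := F_pos (m+1)
  refine ⟨?_, ?_, ?_⟩
  · rw [alpha_up m (F (m+1)) hp1 (by omega)]
    rw [show F m + F (m+1) = F (m+2) from by omega]
    exact alpha_fib (isFib_F (m+2))
  · rw [show F (m+3) + F (m+2) = F (m+4) from by omega]
    exact alpha_fib (isFib_F (m+4))
  · intro t ht0 ht2 htn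
    rw [alpha_up m t ht0 ht2]
    rcases lt_trichotomy t (F (m+1)) with h | h | h
    · have hle := alpha_le (F m + t)
      omega
    · exact absurd h htn
    · match m with
      | 0 =>
        have n0 : F 0 = 1 := rfl
        have n1 : F (0+1) = 1 := rfl
        have n2 : F (0+2) = 2 := rfl
        have n3 : F (0+3) = 3 := rfl
        have n4 : F (0+4) = 5 := rfl
        omega
      | (M+1) =>
        have r1 : F (M+1+1) = F (M+2) := rfl
        have r2 : F (M+1+2) = F (M+3) := rfl
        have r3 : F (M+1+3) = F (M+4) := rfl
        have r4 : F (M+1+4) = F (M+5) := rfl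
        have f1 : F (M+2) = F (M+1) + F M := F_add_two M
        have f2 : F (M+3) = F (M+2) + F (M+1) := F_add_two (M+1)
        have f3 : F (M+4) = F (M+3) + F (M+2) := F_add_two (M+2)
        have f5 : F (M+5) = F (M+4) + F (M+3) := F_add_two (M+3)
        have f4 := F_pos M
        have f6 : F M ≤ F (M+1) := F_le_F (by omega)
        have hst := alpha_eval_step M (F (M+1) + t) (t - F (M+1))
          (show F (M+3) < F (M+1) + t by omega)
          (show F (M+1) + t < F (M+4) by omega)
          (show F (M+1) + t - 2*F (M+1) = t - F (M+1) by omega)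
        show alphaBar (F (M+1) + t) < F (M+3)
        rw [hst]
        have hle := alpha_le (t - F (M+1))
        omega

lemma above2_base (m : ℕ) : AP (m+2) (m+4) (F m) (F (m+2)) (F (m+2)) (F (m+3)) := by
  have n1 : F (m+1+2) = F (m+3) := rfl
  have e1 : F (m+2) = F (m+1) + F m := F_add_two m
  have e2 : F (m+3) = F (m+2) + F (m+1) := F_add_two (m+1)
  have e3 : F (m+4) = F (m+3) + F (m+2) := F_add_two (m+2)
  have hp0 := F_pos m
  have hp1 := F_pos (m+1)
  refine ⟨?_, ?_, ?_⟩
  · rw [alpha_up (m+1) (F m) hp0 (by omega)]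
    rw [show F (m+1) + F m = F (m+2) from by omega]
    exact alpha_fib (isFib_F (m+2))
  · rw [alpha_up (m+1) (F (m+2)) (by omega) (by omega)]
    rw [show F (m+1) + F (m+2) = F (m+3) from by omega]
    exact alpha_fib (isFib_F (m+3))
  · intro t ht0 ht2 htn
    rw [alpha_up (m+1) t ht0 (by omega)]
    rcases lt_trichotomy t (F m) with h | h | h
    · have hle := alpha_le (F (m+1) + t)
      omega
    · exact absurd h htn
    · match m with
      | 0 =>
        have n0 : F 0 = 1 := rfl
        have n1 : F (0+1) = 1 := rfl
        have n2 : F (0+2) = 2 := rfl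
        have n3 : F (0+3) = 3 := rfl
        have n4 : F (0+4) = 5 := rfl
        omega
      | (M+1) =>
        have r1 : F (M+1+1) = F (M+2) := rfl
        have r2 : F (M+1+2) = F (M+3) := rfl
        have r3 : F (M+1+3) = F (M+4) := rfl
        have r4 : F (M+1+4) = F (M+5) := rfl
        have f1 : F (M+2) = F (M+1) + F M := F_add_two M
        have f2 : F (M+3) = F (M+2) + F (M+1) := F_add_two (M+1)
        have f3 : F (M+4) = F (M+3) + F (M+2) := F_add_two (M+2)
        have f5 : F (M+5) = F (M+4) + F (M+3) := F_add_two (M+3)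
        have f4 := F_pos M
        have f6 : F M ≤ F (M+1) := F_le_F (by omega)
        have hst := alpha_eval_step M (F (M+2) + t) (F (M+2) + t - 2*F (M+1))
          (show F (M+3) < F (M+2) + t by omega)
          (show F (M+2) + t < F (M+4) by omega)
          rfl
        show alphaBar (F (M+2) + t) < F (M+3)
        rw [hst]
        have hle := alpha_le (F (M+2) + t - 2*F (M+1))
        omega

lemma AP_big {m i : ℕ} (h2 : m + 2 ≤ i) {a₂ : ℕ} (ha : a₂ ≤ 2 * F (m+1) ∨ a₂ ≤ F (m+2)) :
    a₂ < F (i+2) := by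
  have e1 : F (m+2) = F (m+1) + F m := F_add_two m
  have e2 : F (m+3) = F (m+2) + F (m+1) := F_add_two (m+1)
  have hp0 := F_pos m
  have h3 : F (m+3) < F (i+2) := F_lt_F (by omega) (by omega)
  omega

lemma above0 (m j : ℕ) : AP (m+2) (m+2+3*j) (F (m+1)) (F (m+3)) (2*F (m+1)) (F (m+2)) := by
  induction j with
  | zero => exact above0_base m
  | succ j ih =>
    have hp1 := F_pos (m+1)
    have e1 : F (m+2) = F (m+1) + F m := F_add_two m
    have := AP_step ih hp1 (by have := F_pos m; omega) (AP_big (by omega) (Or.inl le_rfl))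
    exact (by rw [show m+2+3*(j+1) = m+2+3*j+3 from by ring] : AP (m+2) (m+2+3*(j+1)) (F (m+1)) (F (m+3)) (2*F (m+1)) (F (m+2)) = AP (m+2) (m+2+3*j+3) (F (m+1)) (F (m+3)) (2*F (m+1)) (F (m+2))) ▸ this

lemma above1 (m j : ℕ) : AP (m+2) (m+3+3*j) (F (m+1)) (F (m+2)) (F (m+2)) (F (m+4)) := by
  induction j with
  | zero => exact above1_base m
  | succ j ih =>
    have hp1 := F_pos (m+1)
    have e1 : F (m+2) = F (m+1) + F m := F_add_two m
    have hs : F (m+1) < F (m+2) := by have := F_pos m; omega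
    have := AP_step ih hp1 hs (AP_big (by omega) (Or.inr le_rfl))
    exact (by rw [show m+3+3*(j+1) = m+3+3*j+3 from by ring] :
      AP (m+2) (m+3+3*(j+1)) (F (m+1)) (F (m+2)) (F (m+2)) (F (m+4)) = AP (m+2) (m+3+3*j+3) (F (m+1)) (F (m+2)) (F (m+2)) (F (m+4))) ▸ this

lemma above2 (m j : ℕ) : AP (m+2) (m+4+3*j) (F m) (F (m+2)) (F (m+2)) (F (m+3)) := by
  induction j with
  | zero => exact above2_base m
  | succ j ih =>
    have hp0 := F_pos m
    have e1 : F (m+2) = F (m+1) + F m := F_add_two m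
    have hs : F m < F (m+2) := by have := F_pos (m+1); omega
    have := AP_step ih hp0 hs (AP_big (by omega) (Or.inr le_rfl))
    exact (by rw [show m+4+3*(j+1) = m+4+3*j+3 from by ring] :
      AP (m+2) (m+4+3*(j+1)) (F m) (F (m+2)) (F (m+2)) (F (m+3)) = AP (m+2) (m+4+3*j+3) (F m) (F (m+2)) (F (m+2)) (F (m+3))) ▸ this

-- ## membership helpers
lemma mem_VBar {ℓ w : ℕ} (h : F ℓ ≤ alphaBar w) : w ∈ VBar ℓ := h
lemma VBar_alpha {ℓ w : ℕ} (h : w ∈ VBar ℓ) : F ℓ ≤ alphaBar w := h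
lemma VBar_lower {ℓ w : ℕ} (h : w ∈ VBar ℓ) : F ℓ ≤ w := le_trans h (alpha_le w)

lemma alpha_mirror' (i s : ℕ) (h3 : 3 ≤ i) (h0 : 0 < s) (h1 : s < F (i-1)) :
    alphaBar (F i - s) = alphaBar (F i + s) := by
  obtain ⟨k, rfl⟩ : ∃ k, i = k + 3 := ⟨i - 3, by omega⟩
  have hb : F (k+3-1) = F (k+2) := rfl
  exact alpha_mirror k s h0 (by omega)

lemma below_of_AP {ℓ i a₁ v₁ a₂ v₂ : ℕ} (h : AP ℓ i a₁ v₁ a₂ v₂) (h3 : 3 ≤ i)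
    (ha : a₂ < F (i-1)) (h0 : 0 < a₁) (h12 : a₁ < a₂) :
    alphaBar (F i - a₁) = v₁ ∧ alphaBar (F i - a₂) = v₂ ∧
    ∀ t, 0 < t → t < a₂ → t ≠ a₁ → alphaBar (F i - t) < F ℓ := by
  obtain ⟨hA, hB, hG⟩ := h
  refine ⟨?_, ?_, ?_⟩
  · rw [alpha_mirror' i a₁ h3 h0 (by omega)]; exact hA
  · rw [alpha_mirror' i a₂ h3 (by omega) ha]; exact hB
  · intro t ht0 ht2 htn
    rw [alpha_mirror' i t h3 ht0 (by omega)]; exact hG t ht0 ht2 htn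

lemma below1_of_AP {ℓ i a₁ v₁ a₂ v₂ : ℕ} (h : AP ℓ i a₁ v₁ a₂ v₂) (h3 : 3 ≤ i)
    (ha : a₁ < F (i-1)) (h0 : 0 < a₁) (h12 : a₁ < a₂) :
    alphaBar (F i - a₁) = v₁ ∧
    ∀ t, 0 < t → t < a₁ → alphaBar (F i - t) < F ℓ := by
  obtain ⟨hA, hB, hG⟩ := h
  refine ⟨?_, ?_⟩
  · rw [alpha_mirror' i a₁ h3 h0 ha]; exact hA
  · intro t ht0 ht2
    rw [alpha_mirror' i t h3 ht0 (by omega)]; exact hG t ht0 (by omega) (by omega)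

-- ## determination lemmas
lemma det_above1 {ℓ i a₁ v₁ y : ℕ} (hmem : alphaBar (F i + a₁) = v₁) (hv : F ℓ ≤ v₁)
    (hgap : ∀ t, 0 < t → t < a₁ → alphaBar (F i + t) < F ℓ)
    (h0 : 0 < a₁) (hc : ConsecIn (VBar ℓ) (F i) y) : y = F i + a₁ := by
  obtain ⟨_, hyV, hlt, hbet⟩ := hc
  rcases lt_trichotomy y (F i + a₁) with h | h | h
  · exfalso
    have ht := hgap (y - F i) (by omega) (by omega)
    rw [show F i + (y - F i) = y from by omega] at ht
    have := VBar_alpha hyV; omega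
  · exact h
  · exact absurd ⟨by omega, h⟩ (hbet (F i + a₁)
      (mem_VBar (show F ℓ ≤ alphaBar (F i + a₁) from by rw [hmem]; exact hv)))

lemma det_above2 {ℓ i a₁ a₂ v₂ z : ℕ} (hmem : alphaBar (F i + a₂) = v₂) (hv : F ℓ ≤ v₂)
    (hgap : ∀ t, 0 < t → t < a₂ → t ≠ a₁ → alphaBar (F i + t) < F ℓ)
    (h12 : a₁ < a₂) (hc : ConsecIn (VBar ℓ) (F i + a₁) z) : z = F i + a₂ := by
  obtain ⟨_, hzV, hlt, hbet⟩ := hc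
  rcases lt_trichotomy z (F i + a₂) with h | h | h
  · exfalso
    have ht := hgap (z - F i) (by omega) (by omega) (by omega)
    rw [show F i + (z - F i) = z from by omega] at ht
    have := VBar_alpha hzV; omega
  · exact h
  · exact absurd ⟨by omega, h⟩ (hbet (F i + a₂)
      (mem_VBar (show F ℓ ≤ alphaBar (F i + a₂) from by rw [hmem]; exact hv)))

lemma det_below1 {ℓ i a₁ v₁ x : ℕ} (hmem : alphaBar (F i - a₁) = v₁) (hv : F ℓ ≤ v₁)
    (hgap : ∀ t, 0 < t → t < a₁ → alphaBar (F i - t) < F ℓ)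
    (h0 : 0 < a₁) (hai : a₁ < F i) (hc : ConsecIn (VBar ℓ) x (F i)) : x = F i - a₁ := by
  obtain ⟨hxV, _, hlt, hbet⟩ := hc
  rcases lt_trichotomy x (F i - a₁) with h | h | h
  · exact absurd ⟨h, by omega⟩ (hbet (F i - a₁)
      (mem_VBar (show F ℓ ≤ alphaBar (F i - a₁) from by rw [hmem]; exact hv)))
  · exact h
  · exfalso
    have ht := hgap (F i - x) (by omega) (by omega)
    rw [show F i - (F i - x) = x from by omega] at ht
    have := VBar_alpha hxV; omega

lemma det_below2 {ℓ i a₁ a₂ v₂ x : ℕ} (hmem : alphaBar (F i - a₂) = v₂) (hv : F ℓ ≤ v₂)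
    (hgap : ∀ t, 0 < t → t < a₂ → t ≠ a₁ → alphaBar (F i - t) < F ℓ)
    (h12 : a₁ < a₂) (hai : a₂ < F i) (hc : ConsecIn (VBar ℓ) x (F i - a₁)) : x = F i - a₂ := by
  obtain ⟨hxV, _, hlt, hbet⟩ := hc
  rcases lt_trichotomy x (F i - a₂) with h | h | h
  · exact absurd ⟨h, by omega⟩ (hbet (F i - a₂)
      (mem_VBar (show F ℓ ≤ alphaBar (F i - a₂) from by rw [hmem]; exact hv)))
  · exact h
  · exfalso
    have ht := hgap (F i - x) (by omega) (by omega) (by omega)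
    rw [show F i - (F i - x) = x from by omega] at ht
    have := VBar_alpha hxV; omega

lemma exists_window {w : ℕ} (h2 : 2 ≤ w) (hnf : ¬ IsFib w) :
    ∃ j, F (j+3) < w ∧ w < F (j+4) := by
  have hub : w < F (w+1) := by have := self_le_F (w+1); omega
  have hmem : w ∈ {n : ℕ | w < F (n+1)} := hub
  have hne : ({n : ℕ | w < F (n+1)} : Set ℕ).Nonempty := ⟨w, hmem⟩
  set n₀ := sInf {n : ℕ | w < F (n+1)} with hn₀
  have h1 : w < F (n₀+1) := Nat.sInf_mem hne
  have hlow : F n₀ ≤ w := by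
    rcases Nat.eq_zero_or_pos n₀ with h | h
    · rw [h]; exact le_trans (by norm_num [F0]) h2
    · have hnm := Nat.notMem_of_lt_sInf (show n₀ - 1 < sInf {n : ℕ | w < F (n+1)} from by omega)
      simp only [Set.mem_setOf_eq, not_lt] at hnm
      rw [show n₀ - 1 + 1 = n₀ from by omega] at hnm
      exact hnm
  have hneq : F n₀ ≠ w := fun h => hnf (h ▸ isFib_F n₀)
  have h3 : 3 ≤ n₀ := by
    by_contra h
    have r0 : F (0+1) = 1 := rfl
    have r1 : F (1+1) = 2 := rfl
    have r2 : F (2+1) = 3 := rfl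
    have r3 : F 1 = 1 := rfl
    have r4 : F 2 = 2 := rfl
    have r5 : F 0 = 1 := rfl
    interval_cases n₀ <;> omega
  exact ⟨n₀-3, by rw [show n₀-3+3 = n₀ from by omega]; omega,
    by rw [show n₀-3+4 = n₀+1 from by omega]; omega⟩

-- ## conclusion predicate
def Cs (ℓ ax ay az d1 d2 d3 : ℕ) : Prop :=
  (  (F (ℓ + 1) ≤ ax ∧ ay = F ℓ ∧ F (ℓ + 1) ≤ az ∧ d3 = F ℓ)
   ∧ ¬(ax = F ℓ ∧ F (ℓ + 1) ≤ ay ∧ az = F ℓ ∧ d1 = d2)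
   ∧ ¬(ax = F ℓ ∧ ay = F (ℓ + 1) ∧ F (ℓ + 2) ≤ az ∧ d1 = F (ℓ - 1) ∧ d2 = F (ℓ - 1))
   ∧ ¬(F (ℓ + 2) ≤ ax ∧ ay = F (ℓ + 1) ∧ az = F ℓ ∧ d1 = F (ℓ - 1) ∧ d2 = F (ℓ - 1))) ∨
  (  ¬(F (ℓ + 1) ≤ ax ∧ ay = F ℓ ∧ F (ℓ + 1) ≤ az ∧ d3 = F ℓ)
   ∧ (ax = F ℓ ∧ F (ℓ + 1) ≤ ay ∧ az = F ℓ ∧ d1 = d2)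
   ∧ ¬(ax = F ℓ ∧ ay = F (ℓ + 1) ∧ F (ℓ + 2) ≤ az ∧ d1 = F (ℓ - 1) ∧ d2 = F (ℓ - 1))
   ∧ ¬(F (ℓ + 2) ≤ ax ∧ ay = F (ℓ + 1) ∧ az = F ℓ ∧ d1 = F (ℓ - 1) ∧ d2 = F (ℓ - 1))) ∨
  (  ¬(F (ℓ + 1) ≤ ax ∧ ay = F ℓ ∧ F (ℓ + 1) ≤ az ∧ d3 = F ℓ)
   ∧ ¬(ax = F ℓ ∧ F (ℓ + 1) ≤ ay ∧ az = F ℓ ∧ d1 = d2)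
   ∧ (ax = F ℓ ∧ ay = F (ℓ + 1) ∧ F (ℓ + 2) ≤ az ∧ d1 = F (ℓ - 1) ∧ d2 = F (ℓ - 1))
   ∧ ¬(F (ℓ + 2) ≤ ax ∧ ay = F (ℓ + 1) ∧ az = F ℓ ∧ d1 = F (ℓ - 1) ∧ d2 = F (ℓ - 1))) ∨
  (  ¬(F (ℓ + 1) ≤ ax ∧ ay = F ℓ ∧ F (ℓ + 1) ≤ az ∧ d3 = F ℓ)
   ∧ ¬(ax = F ℓ ∧ F (ℓ + 1) ≤ ay ∧ az = F ℓ ∧ d1 = d2)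
   ∧ ¬(ax = F ℓ ∧ ay = F (ℓ + 1) ∧ F (ℓ + 2) ≤ az ∧ d1 = F (ℓ - 1) ∧ d2 = F (ℓ - 1))
   ∧ (F (ℓ + 2) ≤ ax ∧ ay = F (ℓ + 1) ∧ az = F ℓ ∧ d1 = F (ℓ - 1) ∧ d2 = F (ℓ - 1)))

lemma Cs_of1 {ℓ ax ay az d1 d2 d3 : ℕ}
    (h1 : F (ℓ + 1) ≤ ax ∧ ay = F ℓ ∧ F (ℓ + 1) ≤ az ∧ d3 = F ℓ)
    (h2 : ¬(ax = F ℓ ∧ F (ℓ + 1) ≤ ay ∧ az = F ℓ ∧ d1 = d2))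
    (h3 : ¬(ax = F ℓ ∧ ay = F (ℓ + 1) ∧ F (ℓ + 2) ≤ az ∧ d1 = F (ℓ - 1) ∧ d2 = F (ℓ - 1)))
    (h4 : ¬(F (ℓ + 2) ≤ ax ∧ ay = F (ℓ + 1) ∧ az = F ℓ ∧ d1 = F (ℓ - 1) ∧ d2 = F (ℓ - 1))) :
    Cs ℓ ax ay az d1 d2 d3 := Or.inl ⟨h1, h2, h3, h4⟩

lemma Cs_of2 {ℓ ax ay az d1 d2 d3 : ℕ}
    (h1 : ¬(F (ℓ + 1) ≤ ax ∧ ay = F ℓ ∧ F (ℓ + 1) ≤ az ∧ d3 = F ℓ))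
    (h2 : ax = F ℓ ∧ F (ℓ + 1) ≤ ay ∧ az = F ℓ ∧ d1 = d2)
    (h3 : ¬(ax = F ℓ ∧ ay = F (ℓ + 1) ∧ F (ℓ + 2) ≤ az ∧ d1 = F (ℓ - 1) ∧ d2 = F (ℓ - 1)))
    (h4 : ¬(F (ℓ + 2) ≤ ax ∧ ay = F (ℓ + 1) ∧ az = F ℓ ∧ d1 = F (ℓ - 1) ∧ d2 = F (ℓ - 1))) :
    Cs ℓ ax ay az d1 d2 d3 := Or.inr (Or.inl ⟨h1, h2, h3, h4⟩)

lemma Cs_of3 {ℓ ax ay az d1 d2 d3 : ℕ}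
    (h1 : ¬(F (ℓ + 1) ≤ ax ∧ ay = F ℓ ∧ F (ℓ + 1) ≤ az ∧ d3 = F ℓ))
    (h2 : ¬(ax = F ℓ ∧ F (ℓ + 1) ≤ ay ∧ az = F ℓ ∧ d1 = d2))
    (h3 : ax = F ℓ ∧ ay = F (ℓ + 1) ∧ F (ℓ + 2) ≤ az ∧ d1 = F (ℓ - 1) ∧ d2 = F (ℓ - 1))
    (h4 : ¬(F (ℓ + 2) ≤ ax ∧ ay = F (ℓ + 1) ∧ az = F ℓ ∧ d1 = F (ℓ - 1) ∧ d2 = F (ℓ - 1))) :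
    Cs ℓ ax ay az d1 d2 d3 := Or.inr (Or.inr (Or.inl ⟨h1, h2, h3, h4⟩))

lemma Cs_of4 {ℓ ax ay az d1 d2 d3 : ℕ}
    (h1 : ¬(F (ℓ + 1) ≤ ax ∧ ay = F ℓ ∧ F (ℓ + 1) ≤ az ∧ d3 = F ℓ))
    (h2 : ¬(ax = F ℓ ∧ F (ℓ + 1) ≤ ay ∧ az = F ℓ ∧ d1 = d2))
    (h3 : ¬(ax = F ℓ ∧ ay = F (ℓ + 1) ∧ F (ℓ + 2) ≤ az ∧ d1 = F (ℓ - 1) ∧ d2 = F (ℓ - 1)))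
    (h4 : F (ℓ + 2) ≤ ax ∧ ay = F (ℓ + 1) ∧ az = F ℓ ∧ d1 = F (ℓ - 1) ∧ d2 = F (ℓ - 1)) :
    Cs ℓ ax ay az d1 d2 d3 := Or.inr (Or.inr (Or.inr ⟨h1, h2, h3, h4⟩))

set_option maxHeartbeats 1000000 in
lemma main (m : ℕ) : ∀ z x y : ℕ, ConsecIn (VBar (m+2)) x y → ConsecIn (VBar (m+2)) y z →
    ¬(x ∈ VBar (m+2+1) ∧ y ∈ VBar (m+2+1) ∧ z ∈ VBar (m+2+1)) →
    Cs (m+2) (alphaBar x) (alphaBar y) (alphaBar z) (y - x) (z - y) (z - x) := by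
  intro z
  induction z using Nat.strong_induction_on with
  | _ z ih =>
  intro x y hxy hyz hnot
  have hxV := hxy.1
  have hyV := hxy.2.1
  have hzV := hyz.2.1
  have hxy_lt := hxy.2.2.1
  have hyz_lt := hyz.2.2.1
  have hxF : F (m+2) ≤ x := VBar_lower hxV
  have e0 : F (m+2) = F (m+1) + F m := F_add_two m
  have e1 : F (m+3) = F (m+2) + F (m+1) := F_add_two (m+1)
  have e2 : F (m+4) = F (m+3) + F (m+2) := F_add_two (m+2)
  have hp0 := F_pos m
  have hp1 := F_pos (m+1)
  have hm01 : F m ≤ F (m+1) := F_le_F (by omega)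
  have h2F : 2 ≤ F (m+2) := by omega
  have q1 : F (m+2+1) = F (m+3) := rfl
  have q2 : F (m+2+2) = F (m+4) := rfl
  have q3 : F (m+2-1) = F (m+1) := rfl
  by_cases hfz : IsFib z
  · -- ============ z is a Fibonacci number ============
    obtain ⟨i, hi2, hiz⟩ := fib_index hfz (by omega)
    have him : m+2 < i := by
      by_contra h
      have := F_le_F (show i ≤ m+2 from by omega)
      omega
    have him2 : m+4 ≤ i := by
      by_contra h
      have hieq : i = m+3 := by omega
      have hz3 : z = F (m+3) := by rw [← hiz, hieq]
      have hyge : F (m+2) ≤ y := VBar_lower hyV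
      obtain ⟨_, _, hG⟩ := above0 m 0
      have hb : F (m+2+3*0) = F (m+2) := rfl
      have ht := hG (y - F (m+2)) (by omega) (by omega) (by omega)
      rw [show F (m+2+3*0) + (y - F (m+2)) = y from by omega] at ht
      have := VBar_alpha hyV
      omega
    obtain ⟨j, hj⟩ : ∃ j, i = m+2+3*j ∨ i = m+3+3*j ∨ i = m+4+3*j := ⟨(i-(m+2))/3, by omega⟩
    have hzeq : alphaBar z = F i := by rw [← hiz]; exact alpha_fib (isFib_F i)
    have hrr : F (i-1) < F i := F_lt_F (by omega) (by omega)
    rcases hj with hcse | hcse | hcse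
    · -- r0 : case (iii)
      have hj1 : 1 ≤ j := by omega
      have hAP : AP (m+2) i (F (m+1)) (F (m+3)) (2*F (m+1)) (F (m+2)) := by
        rw [hcse]; exact above0 m j
      have hr : 2*F (m+1) < F (i-1) := by
        have := F_lt_F (show 1 ≤ m+3 from by omega) (show m+3 < i-1 from by omega)
        omega
      obtain ⟨hb1, hb2, hbG⟩ := below_of_AP hAP (by omega) hr hp1 (by omega)
      have hy : y = F i - F (m+1) :=
        det_below1 hb1 (show F (m+2) ≤ F (m+3) from by omega)
          (fun t a b => hbG t a (by omega) (by omega)) hp1 (by omega)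
          (by rw [hiz]; exact hyz)
      have hx : x = F i - 2*F (m+1) :=
        det_below2 hb2 le_rfl hbG (by omega) (by omega) (by rw [← hy]; exact hxy)
      have hax : alphaBar x = F (m+2) := by rw [hx]; exact hb2
      have hay : alphaBar y = F (m+3) := by rw [hy]; exact hb1
      have hge : F (m+4) ≤ F i := F_le_F (by omega)
      exact Cs_of3 (by omega) (by omega) (by omega) (by omega)
    · -- r1 : case (i)
      have hj1 : 1 ≤ j := by omega
      have hAP : AP (m+2) i (F (m+1)) (F (m+2)) (F (m+2)) (F (m+4)) := by
        rw [hcse]; exact above1 m j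
      have hr : F (m+2) < F (i-1) := F_lt_F (by omega) (by omega)
      obtain ⟨hb1, hb2, hbG⟩ := below_of_AP hAP (by omega) hr hp1 (by omega)
      have hy : y = F i - F (m+1) :=
        det_below1 hb1 le_rfl
          (fun t a b => hbG t a (by omega) (by omega)) hp1 (by omega)
          (by rw [hiz]; exact hyz)
      have hx : x = F i - F (m+2) :=
        det_below2 hb2 (show F (m+2) ≤ F (m+4) from by omega) hbG (by omega) (by omega)
          (by rw [← hy]; exact hxy)
      have hax : alphaBar x = F (m+4) := by rw [hx]; exact hb2
      have hay : alphaBar y = F (m+2) := by rw [hy]; exact hb1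
      have hge : F (m+4) ≤ F i := F_le_F (by omega)
      have hge2 : F (m+4) < F i := F_lt_F (by omega) (by omega)
      exact Cs_of1 (by omega) (by omega) (by omega) (by omega)
    · -- r2 : case (i)
      have hAP : AP (m+2) i (F m) (F (m+2)) (F (m+2)) (F (m+3)) := by
        rw [hcse]; exact above2 m j
      have hr : F (m+2) < F (i-1) := F_lt_F (by omega) (by omega)
      obtain ⟨hb1, hb2, hbG⟩ := below_of_AP hAP (by omega) hr hp0 (by omega)
      have hy : y = F i - F m :=
        det_below1 hb1 le_rfl
          (fun t a b => hbG t a (by omega) (by omega)) hp0 (by omega)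
          (by rw [hiz]; exact hyz)
      have hx : x = F i - F (m+2) :=
        det_below2 hb2 (show F (m+2) ≤ F (m+3) from by omega) hbG (by omega) (by omega)
          (by rw [← hy]; exact hxy)
      have hax : alphaBar x = F (m+3) := by rw [hx]; exact hb2
      have hay : alphaBar y = F (m+2) := by rw [hy]; exact hb1
      have hge : F (m+4) ≤ F i := F_le_F (by omega)
      exact Cs_of1 (by omega) (by omega) (by omega) (by omega)
  · by_cases hfy : IsFib y
    · -- ============ y is a Fibonacci number ============
      have hyge : F (m+2) ≤ y := VBar_lower hyV
      obtain ⟨i, hi2, hiy⟩ := fib_index hfy (by omega)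
      have him : m+2 < i := by
        by_contra h
        have := F_le_F (show i ≤ m+2 from by omega)
        omega
      obtain ⟨j, hj⟩ : ∃ j, i = m+2+3*j ∨ i = m+3+3*j ∨ i = m+4+3*j := ⟨(i-(m+2))/3, by omega⟩
      have hyeq : alphaBar y = F i := by rw [← hiy]; exact alpha_fib (isFib_F i)
      have hrr : F (i-1) < F i := F_lt_F (by omega) (by omega)
      rcases hj with hcse | hcse | hcse
      · -- r0 : contradiction with hnot
        have hj1 : 1 ≤ j := by omega
        have hAP : AP (m+2) i (F (m+1)) (F (m+3)) (2*F (m+1)) (F (m+2)) := by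
          rw [hcse]; exact above0 m j
        obtain ⟨hA1, hA2, hAG⟩ := hAP
        have hr : F (m+1) < F (i-1) := F_lt_F (by omega) (by omega)
        obtain ⟨hb1, hbG⟩ := below1_of_AP ⟨hA1, hA2, hAG⟩ (by omega) hr hp1 (by omega)
        have hx : x = F i - F (m+1) :=
          det_below1 hb1 (show F (m+2) ≤ F (m+3) from by omega) hbG hp1 (by omega)
            (by rw [hiy]; exact hxy)
        have hz : z = F i + F (m+1) :=
          det_above1 hA1 (show F (m+2) ≤ F (m+3) from by omega)
            (fun t a b => hAG t a (by omega) (by omega)) hp1 (by rw [hiy]; exact hyz)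
        have hax : alphaBar x = F (m+3) := by rw [hx]; exact hb1
        have haz : alphaBar z = F (m+3) := by rw [hz]; exact hA1
        have hge : F (m+3) ≤ F i := F_le_F (by omega)
        exact absurd ⟨mem_VBar (by omega), mem_VBar (by omega), mem_VBar (by omega)⟩ hnot
      · -- r1 : case (ii)
        have hAP : AP (m+2) i (F (m+1)) (F (m+2)) (F (m+2)) (F (m+4)) := by
          rw [hcse]; exact above1 m j
        obtain ⟨hA1, hA2, hAG⟩ := hAP
        have hr : F (m+1) < F (i-1) := F_lt_F (by omega) (by omega)
        obtain ⟨hb1, hbG⟩ := below1_of_AP ⟨hA1, hA2, hAG⟩ (by omega) hr hp1 (by omega)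
        have hx : x = F i - F (m+1) :=
          det_below1 hb1 le_rfl hbG hp1 (by omega) (by rw [hiy]; exact hxy)
        have hz : z = F i + F (m+1) :=
          det_above1 hA1 le_rfl
            (fun t a b => hAG t a (by omega) (by omega)) hp1 (by rw [hiy]; exact hyz)
        have hax : alphaBar x = F (m+2) := by rw [hx]; exact hb1
        have haz : alphaBar z = F (m+2) := by rw [hz]; exact hA1
        have hge : F (m+3) ≤ F i := F_le_F (by omega)
        exact Cs_of2 (by omega) (by omega) (by omega) (by omega)
      · -- r2 : case (ii)
        have hAP : AP (m+2) i (F m) (F (m+2)) (F (m+2)) (F (m+3)) := by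
          rw [hcse]; exact above2 m j
        obtain ⟨hA1, hA2, hAG⟩ := hAP
        have hr : F m < F (i-1) := by
          have h' : F (m+1) < F (i-1) := F_lt_F (by omega) (by omega)
          omega
        obtain ⟨hb1, hbG⟩ := below1_of_AP ⟨hA1, hA2, hAG⟩ (by omega) hr hp0 (by omega)
        have hx : x = F i - F m :=
          det_below1 hb1 le_rfl hbG hp0 (by omega) (by rw [hiy]; exact hxy)
        have hz : z = F i + F m :=
          det_above1 hA1 le_rfl
            (fun t a b => hAG t a (by omega) (by omega)) hp0 (by rw [hiy]; exact hyz)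
        have hax : alphaBar x = F (m+2) := by rw [hx]; exact hb1
        have haz : alphaBar z = F (m+2) := by rw [hz]; exact hA1
        have hge : F (m+3) < F i := F_lt_F (by omega) (by omega)
        exact Cs_of2 (by omega) (by omega) (by omega) (by omega)
    · by_cases hfx : IsFib x
      · -- ============ x is a Fibonacci number ============
        obtain ⟨i, hi2, hix⟩ := fib_index hfx (by omega)
        have him : m+2 ≤ i := by
          by_contra h
          have := F_le_F (show i ≤ m+1 from by omega)
          omega
        obtain ⟨j, hj⟩ : ∃ j, i = m+2+3*j ∨ i = m+3+3*j ∨ i = m+4+3*j := ⟨(i-(m+2))/3, by omega⟩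
        have hxeq : alphaBar x = F i := by rw [← hix]; exact alpha_fib (isFib_F i)
        rcases hj with hcse | hcse | hcse
        · -- r0 : case (ii) if j = 0, case (iv) if j ≥ 1
          have hAP : AP (m+2) i (F (m+1)) (F (m+3)) (2*F (m+1)) (F (m+2)) := by
            rw [hcse]; exact above0 m j
          obtain ⟨hA1, hA2, hAG⟩ := hAP
          have hy : y = F i + F (m+1) :=
            det_above1 hA1 (show F (m+2) ≤ F (m+3) from by omega)
              (fun t a b => hAG t a (by omega) (by omega)) hp1 (by rw [hix]; exact hxy)
          have hz : z = F i + 2*F (m+1) :=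
            det_above2 hA2 le_rfl hAG (by omega) (by rw [← hy]; exact hyz)
          have hay : alphaBar y = F (m+3) := by rw [hy]; exact hA1
          have haz : alphaBar z = F (m+2) := by rw [hz]; exact hA2
          rcases Nat.eq_zero_or_pos j with hj0 | hj0
          · have hieq : i = m+2 := by omega
            rw [hieq] at hxeq
            exact Cs_of2 (by omega) (by omega) (by omega) (by omega)
          · have hge : F (m+4) ≤ F i := F_le_F (by omega)
            exact Cs_of4 (by omega) (by omega) (by omega) (by omega)
        · -- r1 : case (i)
          have hAP : AP (m+2) i (F (m+1)) (F (m+2)) (F (m+2)) (F (m+4)) := by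
            rw [hcse]; exact above1 m j
          obtain ⟨hA1, hA2, hAG⟩ := hAP
          have hy : y = F i + F (m+1) :=
            det_above1 hA1 le_rfl
              (fun t a b => hAG t a (by omega) (by omega)) hp1 (by rw [hix]; exact hxy)
          have hz : z = F i + F (m+2) :=
            det_above2 hA2 (show F (m+2) ≤ F (m+4) from by omega) hAG (by omega)
              (by rw [← hy]; exact hyz)
          have hay : alphaBar y = F (m+2) := by rw [hy]; exact hA1
          have haz : alphaBar z = F (m+4) := by rw [hz]; exact hA2
          have hge : F (m+3) ≤ F i := F_le_F (by omega)
          exact Cs_of1 (by omega) (by omega) (by omega) (by omega)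
        · -- r2 : case (i)
          have hAP : AP (m+2) i (F m) (F (m+2)) (F (m+2)) (F (m+3)) := by
            rw [hcse]; exact above2 m j
          obtain ⟨hA1, hA2, hAG⟩ := hAP
          have hy : y = F i + F m :=
            det_above1 hA1 le_rfl
              (fun t a b => hAG t a (by omega) (by omega)) hp0 (by rw [hix]; exact hxy)
          have hz : z = F i + F (m+2) :=
            det_above2 hA2 (show F (m+2) ≤ F (m+3) from by omega) hAG (by omega)
              (by rw [← hy]; exact hyz)
          have hay : alphaBar y = F (m+2) := by rw [hy]; exact hA1
          have haz : alphaBar z = F (m+3) := by rw [hz]; exact hA2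
          have hge : F (m+4) ≤ F i := F_le_F (by omega)
          exact Cs_of1 (by omega) (by omega) (by omega) (by omega)
      · -- ============ interior : none of x, y, z is Fibonacci ============
        obtain ⟨j, hw1, hw2⟩ := exists_window (by omega) hfx
        have hpj : 0 < F (j+1) := F_pos (j+1)
        have hc1 : 2*F (j+1) < F (j+3) := by
          have f1 : F (j+2) = F (j+1) + F j := F_add_two j
          have f2 : F (j+3) = F (j+2) + F (j+1) := F_add_two (j+1)
          have := F_pos j
          omega
        have hyw : y < F (j+4) := by
          by_contra h
          have hmemF : F (j+4) ∈ VBar (m+2) :=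
            mem_VBar (by rw [alpha_fib (isFib_F (j+4))]; omega)
          rcases eq_or_lt_of_le (show F (j+4) ≤ y from by omega) with h' | h'
          · exact hfy (h' ▸ isFib_F (j+4))
          · exact hxy.2.2.2 (F (j+4)) hmemF ⟨hw2, h'⟩
        have hzw : z < F (j+4) := by
          by_contra h
          have hmemF : F (j+4) ∈ VBar (m+2) :=
            mem_VBar (by rw [alpha_fib (isFib_F (j+4))]; omega)
          rcases eq_or_lt_of_le (show F (j+4) ≤ z from by omega) with h' | h'
          · exact hfz (h' ▸ isFib_F (j+4))
          · exact hyz.2.2.2 (F (j+4)) hmemF ⟨hyw, h'⟩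
        have hax : alphaBar (x - 2*F (j+1)) = alphaBar x := alpha_win j x hw1 hw2
        have hay : alphaBar (y - 2*F (j+1)) = alphaBar y := alpha_win j y (by omega) hyw
        have haz : alphaBar (z - 2*F (j+1)) = alphaBar z := alpha_win j z (by omega) hzw
        have hxy' : ConsecIn (VBar (m+2)) (x - 2*F (j+1)) (y - 2*F (j+1)) := by
          refine ⟨mem_VBar (by rw [hax]; exact VBar_alpha hxV),
                  mem_VBar (by rw [hay]; exact VBar_alpha hyV), by omega, ?_⟩
          intro w hw hbd
          have hWa : alphaBar (w + 2*F (j+1) - 2*F (j+1)) = alphaBar (w + 2*F (j+1)) :=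
            alpha_win j (w + 2*F (j+1)) (by omega) (by omega)
          rw [show w + 2*F (j+1) - 2*F (j+1) = w from by omega] at hWa
          refine hxy.2.2.2 (w + 2*F (j+1)) (mem_VBar ?_) ⟨by omega, by omega⟩
          rw [← hWa]; exact VBar_alpha hw
        have hyz' : ConsecIn (VBar (m+2)) (y - 2*F (j+1)) (z - 2*F (j+1)) := by
          refine ⟨mem_VBar (by rw [hay]; exact VBar_alpha hyV),
                  mem_VBar (by rw [haz]; exact VBar_alpha hzV), by omega, ?_⟩
          intro w hw hbd
          have hWa : alphaBar (w + 2*F (j+1) - 2*F (j+1)) = alphaBar (w + 2*F (j+1)) :=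
            alpha_win j (w + 2*F (j+1)) (by omega) (by omega)
          rw [show w + 2*F (j+1) - 2*F (j+1) = w from by omega] at hWa
          refine hyz.2.2.2 (w + 2*F (j+1)) (mem_VBar ?_) ⟨by omega, by omega⟩
          rw [← hWa]; exact VBar_alpha hw
        have hnot' : ¬(x - 2*F (j+1) ∈ VBar (m+2+1) ∧ y - 2*F (j+1) ∈ VBar (m+2+1) ∧
            z - 2*F (j+1) ∈ VBar (m+2+1)) := by
          rintro ⟨h1, h2, h3⟩
          refine hnot ⟨mem_VBar ?_, mem_VBar ?_, mem_VBar ?_⟩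
          · rw [← hax]; exact VBar_alpha h1
          · rw [← hay]; exact VBar_alpha h2
          · rw [← haz]; exact VBar_alpha h3
        have hres := ih (z - 2*F (j+1)) (by omega) (x - 2*F (j+1)) (y - 2*F (j+1))
          hxy' hyz' hnot'
        have hd1 : y - 2*F (j+1) - (x - 2*F (j+1)) = y - x := by omega
        have hd2 : z - 2*F (j+1) - (y - 2*F (j+1)) = z - y := by omega
        have hd3 : z - 2*F (j+1) - (x - 2*F (j+1)) = z - x := by omega
        rw [hax, hay, haz, hd1, hd2, hd3] at hres
        exact hres

theorem VBar_four_cases (ℓ : ℕ) (hℓ : 2 ≤ ℓ) (x y z : ℕ)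
    (hxy : ConsecIn (VBar ℓ) x y) (hyz : ConsecIn (VBar ℓ) y z)
    (hnot : ¬(x ∈ VBar (ℓ + 1) ∧ y ∈ VBar (ℓ + 1) ∧ z ∈ VBar (ℓ + 1))) :
    (  (F (ℓ + 1) ≤ alphaBar x ∧ alphaBar y = F ℓ ∧ F (ℓ + 1) ≤ alphaBar z ∧ z - x = F ℓ)
     ∧ ¬(alphaBar x = F ℓ ∧ F (ℓ + 1) ≤ alphaBar y ∧ alphaBar z = F ℓ ∧ y - x = z - y)
     ∧ ¬(alphaBar x = F ℓ ∧ alphaBar y = F (ℓ + 1) ∧ F (ℓ + 2) ≤ alphaBar z ∧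
           y - x = F (ℓ - 1) ∧ z - y = F (ℓ - 1))
     ∧ ¬(F (ℓ + 2) ≤ alphaBar x ∧ alphaBar y = F (ℓ + 1) ∧ alphaBar z = F ℓ ∧
           y - x = F (ℓ - 1) ∧ z - y = F (ℓ - 1))) ∨
    (  ¬(F (ℓ + 1) ≤ alphaBar x ∧ alphaBar y = F ℓ ∧ F (ℓ + 1) ≤ alphaBar z ∧ z - x = F ℓ)
     ∧ (alphaBar x = F ℓ ∧ F (ℓ + 1) ≤ alphaBar y ∧ alphaBar z = F ℓ ∧ y - x = z - y)
     ∧ ¬(alphaBar x = F ℓ ∧ alphaBar y = F (ℓ + 1) ∧ F (ℓ + 2) ≤ alphaBar z ∧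
           y - x = F (ℓ - 1) ∧ z - y = F (ℓ - 1))
     ∧ ¬(F (ℓ + 2) ≤ alphaBar x ∧ alphaBar y = F (ℓ + 1) ∧ alphaBar z = F ℓ ∧
           y - x = F (ℓ - 1) ∧ z - y = F (ℓ - 1))) ∨
    (  ¬(F (ℓ + 1) ≤ alphaBar x ∧ alphaBar y = F ℓ ∧ F (ℓ + 1) ≤ alphaBar z ∧ z - x = F ℓ)
     ∧ ¬(alphaBar x = F ℓ ∧ F (ℓ + 1) ≤ alphaBar y ∧ alphaBar z = F ℓ ∧ y - x = z - y)
     ∧ (alphaBar x = F ℓ ∧ alphaBar y = F (ℓ + 1) ∧ F (ℓ + 2) ≤ alphaBar z ∧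
           y - x = F (ℓ - 1) ∧ z - y = F (ℓ - 1))
     ∧ ¬(F (ℓ + 2) ≤ alphaBar x ∧ alphaBar y = F (ℓ + 1) ∧ alphaBar z = F ℓ ∧
           y - x = F (ℓ - 1) ∧ z - y = F (ℓ - 1))) ∨
    (  ¬(F (ℓ + 1) ≤ alphaBar x ∧ alphaBar y = F ℓ ∧ F (ℓ + 1) ≤ alphaBar z ∧ z - x = F ℓ)
     ∧ ¬(alphaBar x = F ℓ ∧ F (ℓ + 1) ≤ alphaBar y ∧ alphaBar z = F ℓ ∧ y - x = z - y)
     ∧ ¬(alphaBar x = F ℓ ∧ alphaBar y = F (ℓ + 1) ∧ F (ℓ + 2) ≤ alphaBar z ∧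
           y - x = F (ℓ - 1) ∧ z - y = F (ℓ - 1))
     ∧ (F (ℓ + 2) ≤ alphaBar x ∧ alphaBar y = F (ℓ + 1) ∧ alphaBar z = F ℓ ∧
           y - x = F (ℓ - 1) ∧ z - y = F (ℓ - 1))) := by
  obtain ⟨m, rfl⟩ : ∃ m, ℓ = m + 2 := ⟨ℓ - 2, by omega⟩
  have h := main m z x y hxy hyz hnot
  unfold Cs at h
  exact h
end
end

section
/- Fix ξ = (1, ξ_1, ξ_2) ∈ ℝ³ and suppose Minkowski's estimate L_{ξ,1}(q)+L_{ξ,2}(q)+L_{ξ,3}(q) = q_1+q_2+O_ξ(1) holds (with constant c ≥ 0 depending only on ξ). Let x_1, x_2, x_3 ∈ ℤ³ be linearly independent, let q = (q_1,q_2) ∈ ℝ², p = (p_1,p_2,p_3) ∈ ℝ³ and δ ≥ 0 satisfy p_1+p_2+p_3 = q_1+q_2 and L_{x_j}(q) ≤ p_j + δ for j = 1,2,3. Then ‖L_ξ(q) − Φ(p)‖_∞ ≤ 5δ + 2c, where Φ: ℝ³→ℝ³ lists the coordinates of a point in non-decreasing order. -/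
noncomputable section

/-- `Lmin ξ₁ ξ₂ j q` is the logarithm `L_{ξ,j}(q)` of the `j`-th minimum. -/
noncomputable def Lmin (ξ₁ ξ₂ : ℝ) (j : ℕ) (q : ℝ × ℝ) : ℝ :=
  sInf {t : ℝ | ∃ v : Fin j → Fin 3 → ℤ, LinearIndependent ℤ v ∧
    ∀ m : Fin j,
      |(v m 0 : ℝ)| ≤ Real.exp t ∧
      |(v m 0 : ℝ) * ξ₁ - (v m 1 : ℝ)| ≤ Real.exp (t - q.1) ∧
      |(v m 0 : ℝ) * ξ₂ - (v m 2 : ℝ)| ≤ Real.exp (t - q.2)}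

/-- The trajectory `L_x(q)` of a nonzero integer point `x`, i.e. the maximum of
`log|x₀|`, `q₁ + log|x₀ξ₁ - x₁|`, `q₂ + log|x₀ξ₂ - x₂|`, where a term is omitted
when it would involve `log 0`. -/
noncomputable def traj (ξ₁ ξ₂ : ℝ) (x : Fin 3 → ℤ) (q : ℝ × ℝ) : ℝ :=
  sSup {t : ℝ |
    ((x 0 : ℝ) ≠ 0 ∧ t = Real.log |(x 0 : ℝ)|) ∨
    ((x 0 : ℝ) * ξ₁ - (x 1 : ℝ) ≠ 0 ∧ t = q.1 + Real.log |(x 0 : ℝ) * ξ₁ - (x 1 : ℝ)|) ∨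
    ((x 0 : ℝ) * ξ₂ - (x 2 : ℝ) ≠ 0 ∧ t = q.2 + Real.log |(x 0 : ℝ) * ξ₂ - (x 2 : ℝ)|)}

/-- `Φ : ℝ³ → ℝ³` lists the coordinates of a point in non-decreasing order. -/
noncomputable def sort3 (p : ℝ × ℝ × ℝ) : ℝ × ℝ × ℝ :=
  (min p.1 (min p.2.1 p.2.2),
   p.1 + p.2.1 + p.2.2 - min p.1 (min p.2.1 p.2.2) - max p.1 (max p.2.1 p.2.2),
   max p.1 (max p.2.1 p.2.2))

lemma int_eq_zero_of_abs_cast_lt_one {n : ℤ} (h : |(n : ℝ)| < 1) : n = 0 := by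
  have h1 : ((|n| : ℤ) : ℝ) < 1 := by rwa [Int.cast_abs]
  have h2 : |n| < 1 := by exact_mod_cast h1
  rw [abs_lt] at h2
  omega

lemma traj_imp (ξ₁ ξ₂ : ℝ) (x : Fin 3 → ℤ) (q : ℝ × ℝ) (t : ℝ)
    (h : traj ξ₁ ξ₂ x q ≤ t) :
    |(x 0 : ℝ)| ≤ Real.exp t ∧
    |(x 0 : ℝ) * ξ₁ - (x 1 : ℝ)| ≤ Real.exp (t - q.1) ∧
    |(x 0 : ℝ) * ξ₂ - (x 2 : ℝ)| ≤ Real.exp (t - q.2) := by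
  set S := {s : ℝ |
    ((x 0 : ℝ) ≠ 0 ∧ s = Real.log |(x 0 : ℝ)|) ∨
    ((x 0 : ℝ) * ξ₁ - (x 1 : ℝ) ≠ 0 ∧ s = q.1 + Real.log |(x 0 : ℝ) * ξ₁ - (x 1 : ℝ)|) ∨
    ((x 0 : ℝ) * ξ₂ - (x 2 : ℝ) ≠ 0 ∧ s = q.2 + Real.log |(x 0 : ℝ) * ξ₂ - (x 2 : ℝ)|)}
    with hS
  have hT : traj ξ₁ ξ₂ x q = sSup S := rfl
  have hbdd : BddAbove S := by
    have hsub : S ⊆ {Real.log |(x 0 : ℝ)|, q.1 + Real.log |(x 0 : ℝ) * ξ₁ - (x 1 : ℝ)|,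
        q.2 + Real.log |(x 0 : ℝ) * ξ₂ - (x 2 : ℝ)|} := by
      intro s hs
      rcases hs with ⟨_, rfl⟩ | ⟨_, rfl⟩ | ⟨_, rfl⟩ <;> simp
    exact (Set.Finite.subset (Set.toFinite _) hsub).bddAbove
  refine ⟨?_, ?_, ?_⟩
  · by_cases h0 : (x 0 : ℝ) = 0
    · rw [h0]; simp [Real.exp_pos t |>.le]
    · have hm : Real.log |(x 0 : ℝ)| ≤ t :=
        le_trans (le_csSup hbdd (Or.inl ⟨h0, rfl⟩)) (hT ▸ h)
      calc |(x 0 : ℝ)| = Real.exp (Real.log |(x 0 : ℝ)|) :=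
            (Real.exp_log (abs_pos.mpr h0)).symm
        _ ≤ Real.exp t := Real.exp_le_exp.mpr hm
  · by_cases h0 : (x 0 : ℝ) * ξ₁ - (x 1 : ℝ) = 0
    · rw [h0]; simp [Real.exp_pos _ |>.le]
    · have hm : q.1 + Real.log |(x 0 : ℝ) * ξ₁ - (x 1 : ℝ)| ≤ t :=
        le_trans (le_csSup hbdd (Or.inr (Or.inl ⟨h0, rfl⟩))) (hT ▸ h)
      calc |(x 0 : ℝ) * ξ₁ - (x 1 : ℝ)|
          = Real.exp (Real.log |(x 0 : ℝ) * ξ₁ - (x 1 : ℝ)|) :=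
            (Real.exp_log (abs_pos.mpr h0)).symm
        _ ≤ Real.exp (t - q.1) := Real.exp_le_exp.mpr (by linarith)
  · by_cases h0 : (x 0 : ℝ) * ξ₂ - (x 2 : ℝ) = 0
    · rw [h0]; simp [Real.exp_pos _ |>.le]
    · have hm : q.2 + Real.log |(x 0 : ℝ) * ξ₂ - (x 2 : ℝ)| ≤ t :=
        le_trans (le_csSup hbdd (Or.inr (Or.inr ⟨h0, rfl⟩))) (hT ▸ h)
      calc |(x 0 : ℝ) * ξ₂ - (x 2 : ℝ)|
          = Real.exp (Real.log |(x 0 : ℝ) * ξ₂ - (x 2 : ℝ)|) :=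
            (Real.exp_log (abs_pos.mpr h0)).symm
        _ ≤ Real.exp (t - q.2) := Real.exp_le_exp.mpr (by linarith)

lemma Lmin_bdd (ξ₁ ξ₂ : ℝ) (q : ℝ × ℝ) (j : ℕ) (hj : 0 < j) :
    BddBelow {t : ℝ | ∃ v : Fin j → Fin 3 → ℤ, LinearIndependent ℤ v ∧
      ∀ m : Fin j,
        |(v m 0 : ℝ)| ≤ Real.exp t ∧
        |(v m 0 : ℝ) * ξ₁ - (v m 1 : ℝ)| ≤ Real.exp (t - q.1) ∧
        |(v m 0 : ℝ) * ξ₂ - (v m 2 : ℝ)| ≤ Real.exp (t - q.2)} := by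
  refine ⟨min 0 (min q.1 q.2), fun t ht => ?_⟩
  by_contra hlt
  push_neg at hlt
  obtain ⟨v, hv, hm⟩ := ht
  have h0 : t < 0 := lt_of_lt_of_le hlt (min_le_left _ _)
  have hq1 : t < q.1 := lt_of_lt_of_le hlt ((min_le_right _ _).trans (min_le_left _ _))
  have hq2 : t < q.2 := lt_of_lt_of_le hlt ((min_le_right _ _).trans (min_le_right _ _))
  obtain ⟨ha, hb, hcc⟩ := hm ⟨0, hj⟩
  have e0 : Real.exp t < 1 := by
    rw [show (1 : ℝ) = Real.exp 0 by simp]; exact Real.exp_lt_exp.mpr h0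
  have e1 : Real.exp (t - q.1) < 1 := by
    rw [show (1 : ℝ) = Real.exp 0 by simp]; exact Real.exp_lt_exp.mpr (by linarith)
  have e2 : Real.exp (t - q.2) < 1 := by
    rw [show (1 : ℝ) = Real.exp 0 by simp]; exact Real.exp_lt_exp.mpr (by linarith)
  have hv0 : v ⟨0, hj⟩ 0 = 0 := int_eq_zero_of_abs_cast_lt_one (lt_of_le_of_lt ha e0)
  have hv1 : v ⟨0, hj⟩ 1 = 0 := by
    apply int_eq_zero_of_abs_cast_lt_one
    have : |(v ⟨0, hj⟩ 0 : ℝ) * ξ₁ - (v ⟨0, hj⟩ 1 : ℝ)| < 1 := lt_of_le_of_lt hb e1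
    rw [hv0] at this; simpa using this
  have hv2 : v ⟨0, hj⟩ 2 = 0 := by
    apply int_eq_zero_of_abs_cast_lt_one
    have : |(v ⟨0, hj⟩ 0 : ℝ) * ξ₂ - (v ⟨0, hj⟩ 2 : ℝ)| < 1 := lt_of_le_of_lt hcc e2
    rw [hv0] at this; simpa using this
  have : v ⟨0, hj⟩ = 0 := by
    funext i
    fin_cases i
    · exact hv0
    · exact hv1
    · exact hv2
  exact hv.ne_zero ⟨0, hj⟩ this

lemma Lmin_le (ξ₁ ξ₂ : ℝ) (q : ℝ × ℝ) (j : ℕ) (hj : 0 < j) (t : ℝ)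
    (v : Fin j → Fin 3 → ℤ) (hv : LinearIndependent ℤ v)
    (h : ∀ m, traj ξ₁ ξ₂ (v m) q ≤ t) :
    Lmin ξ₁ ξ₂ j q ≤ t :=
  csInf_le (Lmin_bdd ξ₁ ξ₂ q j hj)
    ⟨v, hv, fun m => traj_imp ξ₁ ξ₂ (v m) q t (h m)⟩

lemma aux_main (ξ₁ ξ₂ c : ℝ) (hc : 0 ≤ c)
    (hmink : ∀ q : ℝ × ℝ,
      |Lmin ξ₁ ξ₂ 1 q + Lmin ξ₁ ξ₂ 2 q + Lmin ξ₁ ξ₂ 3 q - (q.1 + q.2)| ≤ c)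
    (y₁ y₂ y₃ : Fin 3 → ℤ) (hli : LinearIndependent ℤ ![y₁, y₂, y₃])
    (q : ℝ × ℝ) (a b d δ : ℝ) (hδ : 0 ≤ δ)
    (hab : a ≤ b) (hbd : b ≤ d)
    (hsum : a + b + d = q.1 + q.2)
    (h1 : traj ξ₁ ξ₂ y₁ q ≤ a + δ)
    (h2 : traj ξ₁ ξ₂ y₂ q ≤ b + δ)
    (h3 : traj ξ₁ ξ₂ y₃ q ≤ d + δ) :
    |Lmin ξ₁ ξ₂ 1 q - a| ≤ 2 * δ + c ∧
    |Lmin ξ₁ ξ₂ 2 q - b| ≤ 2 * δ + c ∧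
    |Lmin ξ₁ ξ₂ 3 q - d| ≤ 2 * δ + c := by
  have hli2 : LinearIndependent ℤ ![y₁, y₂] := by
    have hf : Function.Injective (![0, 1] : Fin 2 → Fin 3) := by decide
    have h' := hli.comp ![0, 1] hf
    have e : ![y₁, y₂, y₃] ∘ ![0, 1] = ![y₁, y₂] := by
      funext m; fin_cases m <;> rfl
    rwa [e] at h'
  have hli1 : LinearIndependent ℤ ![y₁] := by
    have hf : Function.Injective (![0] : Fin 1 → Fin 3) := by decide
    have h' := hli.comp ![0] hf
    have e : ![y₁, y₂, y₃] ∘ ![0] = ![y₁] := by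
      funext m; fin_cases m <;> rfl
    rwa [e] at h'
  have hU1 : Lmin ξ₁ ξ₂ 1 q ≤ a + δ := by
    apply Lmin_le ξ₁ ξ₂ q 1 (by norm_num) _ ![y₁] hli1
    intro m; fin_cases m; simpa using h1
  have hU2 : Lmin ξ₁ ξ₂ 2 q ≤ b + δ := by
    apply Lmin_le ξ₁ ξ₂ q 2 (by norm_num) _ ![y₁, y₂] hli2
    intro m; fin_cases m
    · simpa using h1.trans (by linarith)
    · simpa using h2
  have hU3 : Lmin ξ₁ ξ₂ 3 q ≤ d + δ := by
    apply Lmin_le ξ₁ ξ₂ q 3 (by norm_num) _ ![y₁, y₂, y₃] hli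
    intro m; fin_cases m
    · simpa using h1.trans (by linarith)
    · simpa using h2.trans (by linarith)
    · simpa using h3
  have hM := abs_le.mp (hmink q)
  refine ⟨abs_le.mpr ⟨by linarith [hM.1], by linarith⟩,
    abs_le.mpr ⟨by linarith [hM.1], by linarith⟩,
    abs_le.mpr ⟨by linarith [hM.1], by linarith⟩⟩

lemma li_perm {x₁ x₂ x₃ : Fin 3 → ℤ} (h : LinearIndependent ℤ ![x₁, x₂, x₃])
    (i j k : Fin 3) (hij : i ≠ j) (hik : i ≠ k) (hjk : j ≠ k) :
    LinearIndependent ℤ ![![x₁, x₂, x₃] i, ![x₁, x₂, x₃] j, ![x₁, x₂, x₃] k] := by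
  have hf : Function.Injective (![i, j, k] : Fin 3 → Fin 3) := by
    intro m n hmn
    fin_cases m <;> fin_cases n <;> simp_all
  have h' := h.comp ![i, j, k] hf
  have e : ![x₁, x₂, x₃] ∘ ![i, j, k] =
      ![![x₁, x₂, x₃] i, ![x₁, x₂, x₃] j, ![x₁, x₂, x₃] k] := by
    funext m; fin_cases m <;> rfl
  rwa [e] at h'

theorem Lmin_approximation (ξ₁ ξ₂ : ℝ) (c : ℝ) (hc : 0 ≤ c)
    (hmink : ∀ q : ℝ × ℝ,
      |Lmin ξ₁ ξ₂ 1 q + Lmin ξ₁ ξ₂ 2 q + Lmin ξ₁ ξ₂ 3 q - (q.1 + q.2)| ≤ c)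
    (x₁ x₂ x₃ : Fin 3 → ℤ) (hli : LinearIndependent ℤ ![x₁, x₂, x₃])
    (q : ℝ × ℝ) (p : ℝ × ℝ × ℝ) (δ : ℝ) (hδ : 0 ≤ δ)
    (hsum : p.1 + p.2.1 + p.2.2 = q.1 + q.2)
    (h1 : traj ξ₁ ξ₂ x₁ q ≤ p.1 + δ)
    (h2 : traj ξ₁ ξ₂ x₂ q ≤ p.2.1 + δ)
    (h3 : traj ξ₁ ξ₂ x₃ q ≤ p.2.2 + δ) :
    |Lmin ξ₁ ξ₂ 1 q - (sort3 p).1| ≤ 5 * δ + 2 * c ∧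
    |Lmin ξ₁ ξ₂ 2 q - (sort3 p).2.1| ≤ 5 * δ + 2 * c ∧
    |Lmin ξ₁ ξ₂ 3 q - (sort3 p).2.2| ≤ 5 * δ + 2 * c := by
  obtain ⟨a, b, d⟩ := p
  simp only [sort3] at *
  have weaken : ∀ L v : ℝ, |L - v| ≤ 2 * δ + c → |L - v| ≤ 5 * δ + 2 * c := by
    intro L v h; linarith
  rcases le_total a b with hab | hba
  · rcases le_total b d with hbd | hdb
    · -- a ≤ b ≤ d
      have hmin : min a (min b d) = a := by
        rw [min_eq_left hbd, min_eq_left hab]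
      have hmax : max a (max b d) = d := by
        rw [max_eq_right hbd, max_eq_right (hab.trans hbd)]
      rw [hmin, hmax]
      have H := aux_main ξ₁ ξ₂ c hc hmink x₁ x₂ x₃ hli q a b d δ hδ hab hbd hsum h1 h2 h3
      refine ⟨weaken _ _ H.1, ?_, weaken _ _ H.2.2⟩
      rw [show a + b + d - a - d = b by ring]
      exact weaken _ _ H.2.1
    · rcases le_total a d with had | hda
      · -- a ≤ d ≤ b
        have hmin : min a (min b d) = a := by
          rw [min_eq_right hdb, min_eq_left had]
        have hmax : max a (max b d) = b := by
          rw [max_eq_left hdb, max_eq_right hab]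
        rw [hmin, hmax]
        have hli' : LinearIndependent ℤ ![x₁, x₃, x₂] := by
          simpa using li_perm hli 0 2 1 (by decide) (by decide) (by decide)
        have H := aux_main ξ₁ ξ₂ c hc hmink x₁ x₃ x₂ hli' q a d b δ hδ had hdb
          (by linarith) h1 h3 h2
        refine ⟨weaken _ _ H.1, ?_, weaken _ _ H.2.2⟩
        rw [show a + b + d - a - b = d by ring]
        exact weaken _ _ H.2.1
      · -- d ≤ a ≤ b
        have hmin : min a (min b d) = d := by
          rw [min_eq_right hdb, min_eq_right hda]
        have hmax : max a (max b d) = b := by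
          rw [max_eq_left hdb, max_eq_right hab]
        rw [hmin, hmax]
        have hli' : LinearIndependent ℤ ![x₃, x₁, x₂] := by
          simpa using li_perm hli 2 0 1 (by decide) (by decide) (by decide)
        have H := aux_main ξ₁ ξ₂ c hc hmink x₃ x₁ x₂ hli' q d a b δ hδ hda hab
          (by linarith) h3 h1 h2
        refine ⟨weaken _ _ H.1, ?_, weaken _ _ H.2.2⟩
        rw [show a + b + d - d - b = a by ring]
        exact weaken _ _ H.2.1
  · rcases le_total a d with had | hda
    · -- b ≤ a ≤ d
      have hmin : min a (min b d) = b := by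
        rw [min_eq_left (hba.trans had), min_eq_right hba]
      have hmax : max a (max b d) = d := by
        rw [max_eq_right (hba.trans had), max_eq_right had]
      rw [hmin, hmax]
      have hli' : LinearIndependent ℤ ![x₂, x₁, x₃] := by
        simpa using li_perm hli 1 0 2 (by decide) (by decide) (by decide)
      have H := aux_main ξ₁ ξ₂ c hc hmink x₂ x₁ x₃ hli' q b a d δ hδ hba had
        (by linarith) h2 h1 h3
      refine ⟨weaken _ _ H.1, ?_, weaken _ _ H.2.2⟩
      rw [show a + b + d - b - d = a by ring]
      exact weaken _ _ H.2.1
    · rcases le_total b d with hbd | hdb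
      · -- b ≤ d ≤ a
        have hmin : min a (min b d) = b := by
          rw [min_eq_left hbd, min_eq_right hba]
        have hmax : max a (max b d) = a := by
          rw [max_eq_right hbd, max_eq_left hda]
        rw [hmin, hmax]
        have hli' : LinearIndependent ℤ ![x₂, x₃, x₁] := by
          simpa using li_perm hli 1 2 0 (by decide) (by decide) (by decide)
        have H := aux_main ξ₁ ξ₂ c hc hmink x₂ x₃ x₁ hli' q b d a δ hδ hbd hda
          (by linarith) h2 h3 h1
        refine ⟨weaken _ _ H.1, ?_, weaken _ _ H.2.2⟩
        rw [show a + b + d - b - a = d by ring]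
        exact weaken _ _ H.2.1
      · -- d ≤ b ≤ a
        have hmin : min a (min b d) = d := by
          rw [min_eq_right hdb, min_eq_right hda]
        have hmax : max a (max b d) = a := by
          rw [max_eq_left hdb, max_eq_left hba]
        rw [hmin, hmax]
        have hli' : LinearIndependent ℤ ![x₃, x₂, x₁] := by
          simpa using li_perm hli 2 1 0 (by decide) (by decide) (by decide)
        have H := aux_main ξ₁ ξ₂ c hc hmink x₃ x₂ x₁ hli' q d b a δ hδ hdb hba
          (by linarith) h3 h2 h1
        refine ⟨weaken _ _ H.1, ?_, weaken _ _ H.2.2⟩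
        rw [show a + b + d - d - a = b by ring]
        exact weaken _ _ H.2.1
end
end
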